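/- For odd integers C₁, C₂, integers L ≤ U, and indeterminates X, Y with Y²X^{C₂} ≠ 1, the sum ∑_{L ≤ u ≤ U} h(u)·Y^u·X^{(C₁+C₂u)/2}·𝟙₀(C₁+C₂u), where h(u) = 1 - q⁻¹ for L < u < U, h(L) = 1, h(U) = -q⁻¹ (h taken as 0-combined appropriately if L = U), and 𝟙₀(n) = 1 if n is even and 0 if odd, equals (Y^L X^{(C₁+C₂L)/2} + (1-q⁻¹)Y^{L+2}X^{(C₁+C₂(L+2))/2}/(1-Y²X^{C₂}))·𝟙₀(C₁+C₂L) + (1-q⁻¹)Y^{L+1}X^{(C₁+C₂(L+1))/2}/(1-Y²X^{C₂})·𝟙₀(C₁+C₂(L+1)) - ((1-q⁻¹)Y^U X^{(C₁+C₂U)/2}/(1-Y²X^{C₂}) + q⁻¹Y^U X^{(C₁+C₂U)/2})·𝟙₀(C₁+C₂U) - (1-q⁻¹)Y^{U+1}X^{(C₁+C₂(U+1))/2}/(1-Y²X^{C₂})·𝟙₀(C₁+C₂(U+1)). -/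

import Mathlib

/-!
The weight is `h(u) = (1 - q⁻¹) + q⁻¹·[u = L] - [u = U]` (also when `L = U`), so the left side is
`(1 - q⁻¹) ∑ f + q⁻¹ f(L) - f(U)` for `f(u) = Y^u X^{(C₁+C₂u)/2} 𝟙₀(C₁+C₂u)`. Shifting `u` by two
preserves the parity of `C₁ + C₂u` and multiplies `f` by `D = Y²X^{C₂}`, so `(1 - D) ∑_{L ≤ u ≤ U} f`
telescopes to `f(L) + f(L+1) - f(U+1) - f(U+2)`.
-/

open Finset

theorem Int.sum_Icc_sub_add_two {G : Type*} [AddCommGroup G] (f : ℤ → G) {L U : ℤ} (hLU : L ≤ U) :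
    ∑ u ∈ Icc L U, (f u - f (u + 2)) = f L + f (L + 1) - f (U + 1) - f (U + 2) := by
  induction U, hLU using Int.leInduction with
  | base => simp only [Icc_self, sum_singleton]; abel
  | succ U hLU ih =>
    rw [← insert_Icc_right_eq_Icc_add_one (by omega), sum_insert (by simp), ih, add_assoc U 1 1,
      add_assoc U 1 2]
    abel

theorem sum_Icc_boundary_weight {R : Type*} [CommRing R] (f : ℤ → R) (q : R) {L U : ℤ}
    (hLU : L ≤ U) :
    ∑ u ∈ Icc L U,
        (if u = L ∧ u = U then 0 else if u = L then 1 else if u = U then -q else 1 - q) * f u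
      = (1 - q) * ∑ u ∈ Icc L U, f u + q * f L - f U := by
  have hw : ∀ u, (if u = L ∧ u = U then 0 else if u = L then 1 else if u = U then -q else 1 - q)
      = (1 - q) + (if u = L then q else 0) - (if u = U then 1 else 0) := by
    intro u; split_ifs <;> simp_all
  simp only [hw, sub_mul, add_mul, ite_mul, zero_mul, one_mul, sum_sub_distrib, sum_add_distrib,
    sum_ite_eq', mem_Icc, le_refl, hLU, and_self, if_true, mul_sum]

section
variable {K : Type*} [Field K]

def parityMonomial (X Y : K) (C₁ C₂ u : ℤ) : K :=
  Y ^ u * X ^ ((C₁ + C₂ * u) / 2) * if Even (C₁ + C₂ * u) then 1 else 0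

lemma zpow_half_add_two {X : K} (hX : X ≠ 0) (C₁ C₂ u : ℤ) :
    X ^ ((C₁ + C₂ * (u + 2)) / 2) = X ^ ((C₁ + C₂ * u) / 2) * X ^ C₂ := by
  rw [← zpow_add₀ hX, show C₁ + C₂ * (u + 2) = C₁ + C₂ * u + C₂ * 2 by ring,
    Int.add_mul_ediv_right _ _ two_ne_zero]

lemma even_add_two_iff (C₁ C₂ u : ℤ) : Even (C₁ + C₂ * (u + 2)) ↔ Even (C₁ + C₂ * u) := by
  rw [show C₁ + C₂ * (u + 2) = C₁ + C₂ * u + 2 * C₂ by ring]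
  exact Int.even_add.trans (by simp)

lemma parityMonomial_add_two {X Y : K} (hX : X ≠ 0) (hY : Y ≠ 0) (C₁ C₂ u : ℤ) :
    parityMonomial X Y C₁ C₂ (u + 2) = Y ^ 2 * X ^ C₂ * parityMonomial X Y C₁ C₂ u := by
  simp only [parityMonomial, zpow_half_add_two hX, even_add_two_iff, zpow_add₀ hY, zpow_ofNat]
  ring

lemma sum_Icc_parityMonomial {X Y : K} (hX : X ≠ 0) (hY : Y ≠ 0) (C₁ C₂ : ℤ) {L U : ℤ}
    (hLU : L ≤ U) :
    (1 - Y ^ 2 * X ^ C₂) * ∑ u ∈ Icc L U, parityMonomial X Y C₁ C₂ u =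
      parityMonomial X Y C₁ C₂ L + parityMonomial X Y C₁ C₂ (L + 1)
        - parityMonomial X Y C₁ C₂ (U + 1) - parityMonomial X Y C₁ C₂ (U + 2) := by
  rw [← Int.sum_Icc_sub_add_two _ hLU, mul_sum]
  refine sum_congr rfl fun u _ => ?_
  rw [parityMonomial_add_two hX hY]
  ring
end

theorem stmt_7_general {K : Type*} [Field K] (X Y qi : K)
    (hX : X ≠ 0) (hY : Y ≠ 0)
    (C₁ C₂ : ℤ)
    (L U : ℤ) (hLU : L ≤ U)
    (hden : (1 : K) - Y ^ 2 * X ^ C₂ ≠ 0) :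
    (∑ u ∈ Finset.Icc L U,
        (if u = L ∧ u = U then 0
         else if u = L then 1
         else if u = U then -qi
         else 1 - qi) * Y ^ u * X ^ ((C₁ + C₂ * u) / 2) *
          (if Even (C₁ + C₂ * u) then 1 else 0)) =
      (Y ^ L * X ^ ((C₁ + C₂ * L) / 2) +
          (1 - qi) * Y ^ (L + 2) * X ^ ((C₁ + C₂ * (L + 2)) / 2) / (1 - Y ^ 2 * X ^ C₂)) *
        (if Even (C₁ + C₂ * L) then 1 else 0) +
      (1 - qi) * Y ^ (L + 1) * X ^ ((C₁ + C₂ * (L + 1)) / 2) / (1 - Y ^ 2 * X ^ C₂) *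
        (if Even (C₁ + C₂ * (L + 1)) then 1 else 0) -
      ((1 - qi) * Y ^ U * X ^ ((C₁ + C₂ * U) / 2) / (1 - Y ^ 2 * X ^ C₂) +
          qi * Y ^ U * X ^ ((C₁ + C₂ * U) / 2)) *
        (if Even (C₁ + C₂ * U) then 1 else 0) -
      (1 - qi) * Y ^ (U + 1) * X ^ ((C₁ + C₂ * (U + 1)) / 2) / (1 - Y ^ 2 * X ^ C₂) *
        (if Even (C₁ + C₂ * (U + 1)) then 1 else 0) := by
  set f := parityMonomial X Y C₁ C₂
  have hsum : ∑ u ∈ Icc L U, f u = (f L + f (L + 1) - f (U + 1) - Y ^ 2 * X ^ C₂ * f U) /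
      (1 - Y ^ 2 * X ^ C₂) := by
    rw [eq_div_iff hden, mul_comm, sum_Icc_parityMonomial hX hY C₁ C₂ hLU,
      parityMonomial_add_two hX hY]
  calc _ = ∑ u ∈ Icc L U, (if u = L ∧ u = U then 0 else if u = L then 1
            else if u = U then -qi else 1 - qi) * f u := by
        simp only [f, parityMonomial, mul_assoc]
    _ = (1 - qi) * ∑ u ∈ Icc L U, f u + qi * f L - f U := sum_Icc_boundary_weight f qi hLU
    _ = _ := by
        rw [hsum]
        simp only [f, parityMonomial, zpow_half_add_two hX, zpow_add₀ hY, zpow_ofNat]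
        field_simp
        ring

/-- Evaluation of a boundary-weighted sum with parity indicator and half-integral
exponents, for odd `C₁`, `C₂`. -/
theorem stmt_7 {K : Type*} [Field K] (X Y qi : K)
    (hX : X ≠ 0) (hY : Y ≠ 0)
    (C₁ C₂ : ℤ) (hC₁ : Odd C₁) (hC₂ : Odd C₂)
    (L U : ℤ) (hLU : L ≤ U)
    (hden : (1 : K) - Y ^ 2 * X ^ C₂ ≠ 0) :
    (∑ u ∈ Finset.Icc L U,
        (if u = L ∧ u = U then 0
         else if u = L then 1
         else if u = U then -qi
         else 1 - qi) * Y ^ u * X ^ ((C₁ + C₂ * u) / 2) *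
          (if Even (C₁ + C₂ * u) then 1 else 0)) =
      (Y ^ L * X ^ ((C₁ + C₂ * L) / 2) +
          (1 - qi) * Y ^ (L + 2) * X ^ ((C₁ + C₂ * (L + 2)) / 2) / (1 - Y ^ 2 * X ^ C₂)) *
        (if Even (C₁ + C₂ * L) then 1 else 0) +
      (1 - qi) * Y ^ (L + 1) * X ^ ((C₁ + C₂ * (L + 1)) / 2) / (1 - Y ^ 2 * X ^ C₂) *
        (if Even (C₁ + C₂ * (L + 1)) then 1 else 0) -
      ((1 - qi) * Y ^ U * X ^ ((C₁ + C₂ * U) / 2) / (1 - Y ^ 2 * X ^ C₂) +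
          qi * Y ^ U * X ^ ((C₁ + C₂ * U) / 2)) *
        (if Even (C₁ + C₂ * U) then 1 else 0) -
      (1 - qi) * Y ^ (U + 1) * X ^ ((C₁ + C₂ * (U + 1)) / 2) / (1 - Y ^ 2 * X ^ C₂) *
        (if Even (C₁ + C₂ * (U + 1)) then 1 else 0) :=
  stmt_7_general X Y qi hX hY C₁ C₂ L U hLU hden
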